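/- arXiv:math/0110283 — 11 statements merged into one kernel-verified Lean document; each statement's English description precedes it below -/
import Mathlib

section
/- The quaternion group Q₈ of order 8 is not a split group: for every pair of elements x, y that generate Q₈, the cyclic subgroup ⟨x⟩ has nontrivial intersection with the subgroup [Q₈,Q₈]·⟨y⟩ generated by the commutator subgroup together with y. -/
/-!
In Q₈ the central element -1 = `a 2` is a commutator, and it is a power of every
nontrivial element, since every element other than ±1 squares to -1. A generating pair
`x, y` of the non-cyclic group Q₈ has `x ≠ 1`, so -1 lies in `⟨x⟩ ∩ [Q₈,Q₈]·⟨y⟩`.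
-/

open Subgroup

open scoped commutatorElement

section SplitCondition

variable {G : Type*} [Group G]

theorem ne_one_of_closure_pair_eq_top (hG : ¬IsCyclic G) {x y : G}
    (hgen : closure {x, y} = ⊤) : x ≠ 1 := by
  rintro rfl
  rw [closure_insert_one, ← zpowers_eq_closure] at hgen
  exact hG (isCyclic_iff_exists_zpowers_eq_top.mpr ⟨y, hgen⟩)

theorem zpowers_inf_commutator_sup_zpowers_ne_bot (hG : ¬IsCyclic G) {z : G} (hz : z ≠ 1)
    (hz_comm : z ∈ commutator G) (hz_pow : ∀ g : G, g ≠ 1 → z ∈ zpowers g) {x y : G}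
    (hgen : closure {x, y} = ⊤) :
    zpowers x ⊓ (commutator G ⊔ zpowers y) ≠ ⊥ := by
  intro hbot
  have hz_mem : z ∈ zpowers x ⊓ (commutator G ⊔ zpowers y) :=
    ⟨hz_pow x (ne_one_of_closure_pair_eq_top hG hgen), mem_sup_left hz_comm⟩
  exact hz (mem_bot.mp (hbot ▸ hz_mem))

end SplitCondition

namespace QuaternionGroup

variable {n : ℕ}

theorem commutatorElement_a_xa (i j : ZMod (2 * n)) :
    ⁅a i, xa j⁆ = (a (2 * i) : QuaternionGroup n) := by
  have h2n : (2 * n : ZMod (2 * n)) = 0 := by exact_mod_cast ZMod.natCast_self (2 * n)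
  rw [commutatorElement_def, show (a i)⁻¹ = a (-i) from rfl,
    show (xa j)⁻¹ = xa ((n : ZMod (2 * n)) + j) from rfl, a_mul_xa, xa_mul_a, xa_mul_xa]
  congr 1
  linear_combination h2n

theorem a_two_mem_commutator : (a 2 : QuaternionGroup n) ∈ commutator (QuaternionGroup n) := by
  rw [← mul_one (2 : ZMod (2 * n)), ← commutatorElement_a_xa 1 0]
  exact commutator_mem_commutator (mem_top _) (mem_top _)

theorem not_isCyclic_two : ¬IsCyclic (QuaternionGroup 2) := by
  intro h
  have := IsCyclic.exponent_eq_card (α := QuaternionGroup 2)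
  rw [exponent, Nat.card_eq_fintype_card, card] at this
  norm_num at this

theorem a_two_mem_zpowers {g : QuaternionGroup 2} (hg : g ≠ 1) : a 2 ∈ zpowers g := by
  have hsq : g ^ 2 = a 2 ∨ g = a 2 := by revert g; decide
  rcases hsq with hsq | rfl
  · exact hsq ▸ pow_mem (mem_zpowers g) 2
  · exact mem_zpowers _

end QuaternionGroup

open QuaternionGroup in
/-- The quaternion group Q₈ is not a split group: for every generating pair x, y,
⟨x⟩ ∩ ([Q₈,Q₈]·⟨y⟩) is nontrivial. -/
theorem quaternionGroup_not_split (x y : QuaternionGroup 2)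
    (hgen : Subgroup.closure {x, y} = ⊤) :
    Subgroup.zpowers x ⊓ (commutator (QuaternionGroup 2) ⊔ Subgroup.zpowers y) ≠ ⊥ :=
  zpowers_inf_commutator_sup_zpowers_ne_bot not_isCyclic_two (by decide) a_two_mem_commutator
    (fun _ => a_two_mem_zpowers) hgen
end

section
/- Let F be a field of characteristic not 2 and T a subgroup of Fˣ containing all nonzero squares. If T is rigid and −1 is a sum of s elements of T for some finite s > 1 with s minimal, then s = 2. -/
/-- The subset of `F` corresponding to a subgroup of `Fˣ`. -/
def coeSet {F : Type*} [Field F] (T : Subgroup Fˣ) : Set F :=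
  (fun u : Fˣ => (u : F)) '' (T : Set Fˣ)

/-- `T + aT = { t₁ + a·t₂ : t₁, t₂ ∈ T ∪ {0}, t₁ + a·t₂ ≠ 0 }`. -/
def sumSet {F : Type*} [Field F] (T : Set F) (a : F) : Set F :=
  {x | x ≠ 0 ∧ ∃ t₁ ∈ T ∪ {(0 : F)}, ∃ t₂ ∈ T ∪ {(0 : F)}, x = t₁ + a * t₂}

/-- The coset `aT`. -/
def scaleSet {F : Type*} [Field F] (a : F) (T : Set F) : Set F :=
  {x | ∃ t ∈ T, x = a * t}

/-- `F` is `T`-rigid: `T + aT ⊆ T ∪ aT` whenever `a ∉ T ∪ (−T)`. -/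
def IsRigid {F : Type*} [Field F] (T : Set F) : Prop :=
  ∀ a : F, a ≠ 0 → a ∉ T → -a ∉ T → sumSet T a ⊆ T ∪ scaleSet a T

lemma coeSet_mul {F : Type*} [Field F] {T : Subgroup Fˣ} {x y : F}
    (hx : x ∈ coeSet T) (hy : y ∈ coeSet T) : x * y ∈ coeSet T := by
  obtain ⟨u, hu, rfl⟩ := hx
  obtain ⟨v, hv, rfl⟩ := hy
  exact ⟨u * v, mul_mem hu hv, by push_cast; ring⟩

lemma coeSet_one {F : Type*} [Field F] {T : Subgroup Fˣ}
    (hsq : ∀ u : Fˣ, u ^ 2 ∈ T) : (1 : F) ∈ coeSet T :=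
  ⟨1, by simpa using hsq 1, rfl⟩

/-- Key rigidity consequence: for `x ∈ T` with `1 + x ≠ 0`,
    either `1 + x ∈ T` or `-(1+x) ∈ T` (provided `-1 ∉ T`). -/
lemma keyA {F : Type*} [Field F] {T : Subgroup Fˣ}
    (hsq : ∀ u : Fˣ, u ^ 2 ∈ T) (hrigid : IsRigid (coeSet T))
    (hne1 : (-1 : F) ∉ coeSet T) {x : F} (hx : x ∈ coeSet T) (hx1 : 1 + x ≠ 0) :
    1 + x ∈ coeSet T ∨ -(1 + x) ∈ coeSet T := by
  by_contra h
  push_neg at h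
  obtain ⟨h1, h2⟩ := h
  have ha := hrigid (-(1 + x)) (neg_ne_zero.mpr hx1) h2 (by simpa using h1)
  have hm : (-1 : F) ∈ sumSet (coeSet T) (-(1 + x)) := by
    refine ⟨by norm_num, x, Or.inl hx, 1, Or.inl (coeSet_one hsq), by ring⟩
  rcases ha hm with h | ⟨t, ht, heq⟩
  · exact hne1 h
  · obtain ⟨u, hu, rfl⟩ := ht
    refine h1 ⟨u⁻¹, inv_mem hu, ?_⟩
    have hmul : (u : F) * (1 + x) = 1 := by linear_combination heq
    show ((u⁻¹ : Fˣ) : F) = 1 + x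
    rw [Units.val_inv_eq_inv_val]
    exact inv_eq_of_mul_eq_one_right hmul

/-- Sum of two elements of `T`: lies in `T` or in `-T`. -/
lemma keyB {F : Type*} [Field F] {T : Subgroup Fˣ}
    (hsq : ∀ u : Fˣ, u ^ 2 ∈ T) (hrigid : IsRigid (coeSet T))
    (hne1 : (-1 : F) ∉ coeSet T) {x y : F} (hx : x ∈ coeSet T) (hy : y ∈ coeSet T)
    (hxy : x + y ≠ 0) : x + y ∈ coeSet T ∨ -(x + y) ∈ coeSet T := by
  obtain ⟨u, hu, rfl⟩ := hx
  obtain ⟨v, hv, rfl⟩ := hy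
  have hw : ((u⁻¹ * v : Fˣ) : F) ∈ coeSet T := ⟨u⁻¹ * v, mul_mem (inv_mem hu) hv, rfl⟩
  have hu0 : ((u : F)) ≠ 0 := Units.ne_zero u
  have hkey : (u : F) * (1 + ((u⁻¹ * v : Fˣ) : F)) = (u : F) + (v : F) := by
    push_cast
    field_simp
  have hw1 : 1 + ((u⁻¹ * v : Fˣ) : F) ≠ 0 := by
    intro h
    rw [h, mul_zero] at hkey
    exact hxy hkey.symm
  have hum : ((u : F)) ∈ coeSet T := ⟨u, hu, rfl⟩
  rcases keyA hsq hrigid hne1 hw hw1 with h | h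
  · left
    have := coeSet_mul hum h
    rwa [hkey] at this
  · right
    have := coeSet_mul hum h
    have heq : (u : F) * -(1 + ((u⁻¹ * v : Fˣ) : F)) = -((u : F) + (v : F)) := by
      rw [mul_neg, hkey]
    rwa [heq] at this

/-- If T is a rigid subgroup of Fˣ containing the nonzero squares and −1 is a sum of
s elements of T with s > 1 minimal, then s = 2. -/
theorem rigid_level_eq_two {F : Type*} [Field F] (hchar : (2 : F) ≠ 0)
    (T : Subgroup Fˣ) (hsq : ∀ u : Fˣ, u ^ 2 ∈ T)
    (hrigid : IsRigid (coeSet T)) (s : ℕ) (hs : 1 < s)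
    (hsum : ∃ f : Fin s → F, (∀ i, f i ∈ coeSet T) ∧ ∑ i, f i = -1)
    (hmin : ∀ m : ℕ, (∃ f : Fin m → F, (∀ i, f i ∈ coeSet T) ∧ ∑ i, f i = -1) → s ≤ m) :
    s = 2 := by
  have hne1 : (-1 : F) ∉ coeSet T := by
    intro h
    have := hmin 1 ⟨fun _ => -1, fun _ => h, by simp⟩
    omega
  by_contra hs2
  have hs3 : 3 ≤ s := by omega
  obtain ⟨m, rfl⟩ : ∃ m, s = m + 3 := ⟨s - 3, by omega⟩
  obtain ⟨f, hf, hsumf⟩ := hsum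
  rw [Fin.sum_univ_succ, Fin.sum_univ_succ] at hsumf
  -- hsumf : f 0 + (f (Fin.succ 0) + ∑ i : Fin (m+1), f i.succ.succ) = -1
  have hAm : f 0 ∈ coeSet T := hf _
  have hBm : f ((0 : Fin (m + 2)).succ) ∈ coeSet T := hf _
  by_cases h0 : f 0 + f ((0 : Fin (m + 2)).succ) = 0
  · have : m + 3 ≤ m + 1 := hmin (m + 1) ⟨fun i => f i.succ.succ, fun i => hf _, by
      show ∑ i : Fin (m + 1), f i.succ.succ = -1
      linear_combination hsumf - h0⟩
    omega
  rcases keyB hsq hrigid hne1 hAm hBm h0 with h | h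
  · have : m + 3 ≤ m + 2 := hmin (m + 2)
      ⟨Fin.cons (f 0 + f ((0 : Fin (m + 2)).succ)) (fun i => f i.succ.succ), ?_, ?_⟩
    · omega
    · intro i
      refine Fin.cases ?_ ?_ i
      · simpa using h
      · intro j; simpa using hf j.succ.succ
    · rw [Fin.sum_cons]
      linear_combination hsumf
  · obtain ⟨u, hu, huv⟩ := h
    have huinv : ((u⁻¹ : Fˣ) : F) ∈ coeSet T := ⟨u⁻¹, inv_mem hu, rfl⟩
    have hu1 : (u : F) * ((u⁻¹ : Fˣ) : F) = 1 := Units.mul_inv u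
    have huv' : (u : F) = -(f 0 + f ((0 : Fin (m + 2)).succ)) := huv
    have : m + 3 ≤ 2 := hmin 2
      ⟨![f 0 * ((u⁻¹ : Fˣ) : F), f ((0 : Fin (m + 2)).succ) * ((u⁻¹ : Fˣ) : F)], ?_, ?_⟩
    · omega
    · intro i
      fin_cases i
      · exact coeSet_mul hAm huinv
      · exact coeSet_mul hBm huinv
    · rw [Fin.sum_univ_two]
      have hab : f 0 + f ((0 : Fin (m + 2)).succ) = -(u : F) := by linear_combination huv
      calc f 0 * ((u⁻¹ : Fˣ) : F) + f ((0 : Fin (m + 2)).succ) * ((u⁻¹ : Fˣ) : F)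
          = (f 0 + f ((0 : Fin (m + 2)).succ)) * ((u⁻¹ : Fˣ) : F) := by ring
        _ = -((u : F) * ((u⁻¹ : Fˣ) : F)) := by rw [hab]; ring
        _ = -1 := by rw [hu1]
end

section
/- Let F be a field of characteristic not 2 and T a rigid subgroup of Fˣ containing all nonzero squares. If T has level 2 (i.e. −1 ∈ T + T but −1 ∉ T), then T + T = T ∪ (−T). -/
lemma coeSet_ne_zero {F : Type*} [Field F] {T : Subgroup Fˣ} {x : F}
    (h : x ∈ coeSet T) : x ≠ 0 := by
  obtain ⟨u, -, rfl⟩ := h; exact u.ne_zero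

lemma coeSet_one_mem {F : Type*} [Field F] (T : Subgroup Fˣ) : (1 : F) ∈ coeSet T :=
  ⟨1, T.one_mem, rfl⟩

lemma coeSet_inv {F : Type*} [Field F] {T : Subgroup Fˣ} {x : F}
    (hx : x ∈ coeSet T) : x⁻¹ ∈ coeSet T := by
  obtain ⟨u, hu, rfl⟩ := hx
  exact ⟨u⁻¹, T.inv_mem hu, by push_cast; ring⟩

lemma one_add_mem {F : Type*} [Field F] {T : Subgroup Fˣ}
    (hrigid : IsRigid (coeSet T)) (hneg : (-1 : F) ∉ coeSet T)
    {s : F} (hs : s ∈ coeSet T) (hns : (1 : F) + s ≠ 0) :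
    (1 + s) ∈ coeSet T ∨ -(1 + s) ∈ coeSet T := by
  by_contra h
  push_neg at h
  obtain ⟨hb, hnb⟩ := h
  have key : (-1 : F) ∈ coeSet T ∪ scaleSet (-(1 + s)) (coeSet T) := by
    refine hrigid (-(1 + s)) (neg_ne_zero.mpr hns) hnb (by rwa [neg_neg]) ?_
    exact ⟨by norm_num, s, Or.inl hs, 1, Or.inl (coeSet_one_mem T), by ring⟩
  rcases key with h1 | ⟨t, ht, heq⟩
  · exact hneg h1
  · have ht0 : t ≠ 0 := coeSet_ne_zero ht
    have hmul : (1 + s) * t = 1 := by linear_combination heq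
    have : (1 + s) = t⁻¹ := eq_inv_of_mul_eq_one_left hmul
    exact hb (this ▸ coeSet_inv ht)

/-- If T is a rigid subgroup of Fˣ containing the nonzero squares of level 2
(−1 ∈ T + T but −1 ∉ T), then T + T = T ∪ (−T). -/
theorem rigid_level_two_sum {F : Type*} [Field F] (hchar : (2 : F) ≠ 0)
    (T : Subgroup Fˣ) (hsq : ∀ u : Fˣ, u ^ 2 ∈ T)
    (hrigid : IsRigid (coeSet T))
    (hlev : (-1 : F) ∈ sumSet (coeSet T) 1) (hneg : (-1 : F) ∉ coeSet T) :
    sumSet (coeSet T) 1 = coeSet T ∪ {x : F | -x ∈ coeSet T} := by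
  ext x
  constructor
  · rintro ⟨hx0, t₁, ht₁, t₂, ht₂, rfl⟩
    rw [one_mul] at *
    rcases ht₁ with ht₁ | ht₁ <;> rcases ht₂ with ht₂ | ht₂
    · -- both in T
      have ht₁0 : t₁ ≠ 0 := coeSet_ne_zero ht₁
      have hs : t₂ * t₁⁻¹ ∈ coeSet T := coeSet_mul ht₂ (coeSet_inv ht₁)
      have hkey : t₁ * (1 + t₂ * t₁⁻¹) = t₁ + t₂ := by field_simp
      have hns : (1 : F) + t₂ * t₁⁻¹ ≠ 0 := by
        intro h
        apply hx0
        rw [← hkey, h, mul_zero]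
      rcases one_add_mem hrigid hneg hs hns with h | h
      · left
        have := coeSet_mul ht₁ h
        rwa [hkey] at this
      · right
        have := coeSet_mul ht₁ h
        have heq : t₁ * -(1 + t₂ * t₁⁻¹) = -(t₁ + t₂) := by
          rw [mul_neg, hkey]
        rwa [heq] at this
    · left; simp only [Set.mem_singleton_iff] at ht₂; rw [ht₂, add_zero]; exact ht₁
    · left; simp only [Set.mem_singleton_iff] at ht₁; rw [ht₁, zero_add]; exact ht₂
    · exfalso; simp only [Set.mem_singleton_iff] at ht₁ ht₂
      exact hx0 (by rw [ht₁, ht₂, add_zero])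
  · rintro (hx | hx)
    · exact ⟨coeSet_ne_zero hx, x, Or.inl hx, 0, Or.inr rfl, by ring⟩
    · obtain ⟨hm0, u, hu, v, hv, heq⟩ := hlev
      rw [one_mul] at heq
      refine ⟨fun h0 => coeSet_ne_zero hx (by rw [h0, neg_zero]), -x * u, ?_, -x * v, ?_, ?_⟩
      · rcases hu with hu | hu
        · exact Or.inl (coeSet_mul hx hu)
        · simp only [Set.mem_singleton_iff] at hu; right; simp [hu]
      · rcases hv with hv | hv
        · exact Or.inl (coeSet_mul hx hv)
        · simp only [Set.mem_singleton_iff] at hv; right; simp [hv]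
      · rw [one_mul]; linear_combination -x * heq
end

section
/- Let F be a field of characteristic not 2 and T a subgroup of Fˣ containing all nonzero squares such that −1 ∉ T, T + T = T ∪ (−T), and F is (T ∪ −T)-rigid. Then F is T-rigid. -/
lemma coeSet_add_ne_zero {F : Type*} [Field F] {T : Subgroup Fˣ} {x y : F}
    (hneg : (-1 : F) ∉ coeSet T) (hx : x ∈ coeSet T) (hy : y ∈ coeSet T) :
    x + y ≠ 0 := by
  intro h
  apply hneg
  have hx0 := coeSet_ne_zero hx
  have : y * x⁻¹ = -1 := by
    rw [eq_neg_of_add_eq_zero_right h, neg_mul, mul_inv_cancel₀ hx0]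
  rw [← this]
  exact coeSet_mul hy (coeSet_inv hx)

/-- If −1 ∉ T, T + T = T ∪ (−T), and F is (T ∪ −T)-rigid, then F is T-rigid. -/
theorem rigid_of_union_rigid {F : Type*} [Field F] (hchar : (2 : F) ≠ 0)
    (T : Subgroup Fˣ) (hsq : ∀ u : Fˣ, u ^ 2 ∈ T)
    (hneg : (-1 : F) ∉ coeSet T)
    (hTT : sumSet (coeSet T) 1 = coeSet T ∪ {x : F | -x ∈ coeSet T})
    (hrigid : IsRigid (coeSet T ∪ {x : F | -x ∈ coeSet T})) :
    IsRigid (coeSet T) := by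
  -- key: sum of two elements of T lies in T ∪ −T
  have key : ∀ x y : F, x ∈ coeSet T → y ∈ coeSet T →
      x + y ∈ coeSet T ∪ {x : F | -x ∈ coeSet T} := by
    intro x y hx hy
    rw [← hTT]
    exact ⟨coeSet_add_ne_zero hneg hx hy, x, Or.inl hx, y, Or.inl hy, by ring⟩
  intro a ha haT haT' x hx
  obtain ⟨hx0, t₁, ht₁, t₂, ht₂, hxe⟩ := hx
  rcases ht₂ with ht₂ | ht₂
  swap
  · -- t₂ = 0, so x = t₁ ∈ T
    simp only [Set.mem_singleton_iff] at ht₂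
    subst ht₂
    rcases ht₁ with ht₁ | ht₁
    · left; rw [hxe, mul_zero, add_zero]; exact ht₁
    · exact absurd (by simp [hxe, Set.mem_singleton_iff.mp ht₁]) hx0
  rcases ht₁ with ht₁ | ht₁
  swap
  · -- t₁ = 0, so x = a * t₂ ∈ aT
    simp only [Set.mem_singleton_iff] at ht₁
    subst ht₁
    right; exact ⟨t₂, ht₂, by rw [hxe, zero_add]⟩
  -- main case: t₁, t₂ ∈ T
  have haS : a ∉ coeSet T ∪ {x : F | -x ∈ coeSet T} := by
    rintro (h | h); exacts [haT h, haT' h]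
  have haS' : -a ∉ coeSet T ∪ {x : F | -x ∈ coeSet T} := by
    rintro (h | h)
    · exact haT' h
    · exact haT (by simpa using h)
  have ht₂0 : t₂ ≠ 0 := coeSet_ne_zero ht₂
  have hxS : x ∈ sumSet (coeSet T ∪ {x : F | -x ∈ coeSet T}) a :=
    ⟨hx0, t₁, Or.inl (Or.inl ht₁), t₂, Or.inl (Or.inl ht₂), hxe⟩
  rcases hrigid a ha haS haS' hxS with (hx' | hx') | ⟨s, hs, hx'⟩
  · exact Or.inl hx'
  · -- x ∈ −T : contradiction
    exfalso
    set s : F := -x with hsdef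
    have hsT : s ∈ coeSet T := hx'
    have hsum : s + t₁ = -(a * t₂) := by rw [hsdef, hxe]; ring
    have hane : -a = (s + t₁) * t₂⁻¹ := by
      rw [eq_mul_inv_iff_mul_eq₀ ht₂0]
      linear_combination -hsum
    rcases key s t₁ hsT ht₁ with h | h
    · exact haT' (by rw [hane]; exact coeSet_mul h (coeSet_inv ht₂))
    · apply haT
      have : a = -(s + t₁) * t₂⁻¹ := by rw [neg_mul, ← hane, neg_neg]
      rw [this]; exact coeSet_mul h (coeSet_inv ht₂)
  rcases hs with hs | hs
  · exact Or.inr ⟨s, hs, hx'⟩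
  · -- x = a * s with −s ∈ T : contradiction
    exfalso
    set t : F := -s with htdef
    have htT : t ∈ coeSet T := hs
    have hsum : t + t₂ ≠ 0 := coeSet_add_ne_zero hneg htT ht₂
    have heq : t₁ = -a * (t + t₂) := by
      have : t₁ + a * t₂ = a * s := by rw [← hxe, hx']
      rw [htdef]; linear_combination this
    have hane : -a = t₁ * (t + t₂)⁻¹ := by
      rw [eq_mul_inv_iff_mul_eq₀ hsum]
      linear_combination -heq
    rcases key t t₂ htT ht₂ with h | h
    · exact haT' (by rw [hane]; exact coeSet_mul ht₁ (coeSet_inv h))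
    · apply haT
      have hne : (-(t + t₂)) ≠ 0 := neg_ne_zero.mpr hsum
      have : a = t₁ * (-(t + t₂))⁻¹ := by
        rw [eq_mul_inv_iff_mul_eq₀ hne]
        linear_combination -heq
      rw [this]; exact coeSet_mul ht₁ (coeSet_inv h)
end

section
/- Let F be a field of characteristic not 2 and T a subgroup of Fˣ containing all nonzero squares such that −1 ∉ T, −1 ∈ T + T, and F is T-rigid. Then F is (T ∪ −T)-rigid. -/
/-- If −1 ∉ T, −1 ∈ T + T, and F is T-rigid, then F is (T ∪ −T)-rigid. -/
theorem union_rigid_of_rigid {F : Type*} [Field F] (hchar : (2 : F) ≠ 0)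
    (T : Subgroup Fˣ) (hsq : ∀ u : Fˣ, u ^ 2 ∈ T)
    (hneg : (-1 : F) ∉ coeSet T) (hlev : (-1 : F) ∈ sumSet (coeSet T) 1)
    (hrigid : IsRigid (coeSet T)) :
    IsRigid (coeSet T ∪ {x : F | -x ∈ coeSet T}) := by
  intro a ha haS _ x hx
  obtain ⟨hx0, s₁, hs₁, s₂, hs₂, hxe⟩ := hx
  subst hxe
  have haT : a ∉ coeSet T := fun h => haS (Or.inl h)
  have hnaT : -a ∉ coeSet T := fun h => haS (Or.inr (by simpa using h))
  have hna : -a ≠ 0 := neg_ne_zero.mpr ha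
  have key : ∀ b : F, b ≠ 0 → b ∉ coeSet T → -b ∉ coeSet T →
      ∀ t₁, t₁ ∈ coeSet T ∪ {(0:F)} → ∀ t₂, t₂ ∈ coeSet T ∪ {(0:F)} →
      t₁ + b * t₂ ≠ 0 →
      t₁ + b * t₂ ∈ coeSet T ∪ scaleSet b (coeSet T) := by
    intro b hb hb1 hb2 t₁ h1 t₂ h2 hne
    exact hrigid b hb hb1 hb2 ⟨hne, t₁, h1, t₂, h2, rfl⟩
  rcases hs₁ with (h1 | h1) | h1
  · rcases hs₂ with (h2 | h2) | h2
    · -- T, T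
      rcases key a ha haT hnaT s₁ (Or.inl h1) s₂ (Or.inl h2) hx0 with h | ⟨t, ht, he⟩
      · exact Or.inl (Or.inl h)
      · exact Or.inr ⟨t, Or.inl ht, he⟩
    · -- T, -T
      have e : s₁ + a * s₂ = s₁ + -a * -s₂ := by ring
      rw [e] at hx0 ⊢
      rcases key (-a) hna hnaT (by simpa using haT) s₁ (Or.inl h1) (-s₂) (Or.inl h2) hx0
        with h | ⟨t, ht, he⟩
      · exact Or.inl (Or.inl h)
      · refine Or.inr ⟨-t, Or.inr (by simpa using ht), by rw [he]; ring⟩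
    · -- s₂ = 0
      simp only [Set.mem_singleton_iff] at h2
      subst h2
      simpa using Or.inl (Or.inl h1)
  · rcases hs₂ with (h2 | h2) | h2
    · -- -T, T
      have hne : -s₁ + -a * s₂ ≠ 0 := by
        intro h; apply hx0; linear_combination -h
      rcases key (-a) hna hnaT (by simpa using haT) (-s₁) (Or.inl h1) s₂ (Or.inl h2) hne
        with h | ⟨t, ht, he⟩
      · exact Or.inl (Or.inr (by simpa using (show -(s₁ + a*s₂) ∈ coeSet T by
          rw [show -(s₁ + a*s₂) = -s₁ + -a * s₂ by ring]; exact h)))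
      · refine Or.inr ⟨t, Or.inl ht, ?_⟩
        have : -(s₁ + a * s₂) = -a * t := by
          rw [show -(s₁ + a*s₂) = -s₁ + -a * s₂ by ring]; exact he
        linear_combination -this
    · -- -T, -T
      have hne : -s₁ + a * -s₂ ≠ 0 := by
        intro h; apply hx0; linear_combination -h
      rcases key a ha haT hnaT (-s₁) (Or.inl h1) (-s₂) (Or.inl h2) hne
        with h | ⟨t, ht, he⟩
      · refine Or.inl (Or.inr ?_)
        show -(s₁ + a * s₂) ∈ coeSet T
        rw [show -(s₁ + a*s₂) = -s₁ + a * -s₂ by ring]; exact h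
      · refine Or.inr ⟨-t, Or.inr (by simpa using ht), ?_⟩
        have : -(s₁ + a * s₂) = a * t := by
          rw [show -(s₁ + a*s₂) = -s₁ + a * -s₂ by ring]; exact he
        linear_combination -this
    · simp only [Set.mem_singleton_iff] at h2
      subst h2
      refine Or.inl (Or.inr ?_)
      show -(s₁ + a * 0) ∈ coeSet T
      simpa using h1
  · -- s₁ = 0
    simp only [Set.mem_singleton_iff] at h1
    subst h1
    rcases hs₂ with h2 | h2
    · exact Or.inr ⟨s₂, h2, by ring⟩
    · simp only [Set.mem_singleton_iff] at h2
      subst h2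
      exact absurd (by ring) hx0
end

section
/- Let F be a field of characteristic not 2 and S a subgroup of Fˣ of index 2 containing all nonzero squares. Then there exists s ∈ S with 1 + s ∉ S ∪ {0} if and only if S + S = Fˣ. -/
lemma mem_coeSet_iff {F : Type*} [Field F] (S : Subgroup Fˣ) (u : Fˣ) :
    (u : F) ∈ coeSet S ↔ u ∈ S := by
  constructor
  · rintro ⟨v, hv, hvu⟩
    rwa [← (Units.ext hvu : v = u)]
  · intro h; exact ⟨u, h, rfl⟩

/-- For an index-2 subgroup S of Fˣ containing the nonzero squares:
there exists s ∈ S with 1 + s ∉ S ∪ {0} iff S + S = Fˣ. -/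
theorem exists_nonrepr_iff_sum_univ {F : Type*} [Field F] (hchar : (2 : F) ≠ 0)
    (S : Subgroup Fˣ) (hidx : S.index = 2) (hsq : ∀ u : Fˣ, u ^ 2 ∈ S) :
    (∃ s ∈ coeSet S, 1 + s ∉ coeSet S ∧ 1 + s ≠ 0) ↔
      sumSet (coeSet S) 1 = {x : F | x ≠ 0} := by
  constructor
  · rintro ⟨s, hs, hns, hne⟩
    ext x
    simp only [sumSet, Set.mem_setOf_eq]
    constructor
    · rintro ⟨hx, -⟩; exact hx
    · intro hx
      refine ⟨hx, ?_⟩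
      set xu : Fˣ := Units.mk0 x hx with hxu
      by_cases hmem : xu ∈ S
      · exact ⟨x, Or.inl ((mem_coeSet_iff S xu).mpr hmem), 0, Or.inr rfl, by ring⟩
      · obtain ⟨su, hsu, hsus⟩ := hs
        have hsus' : (su : F) = s := hsus
        set w : Fˣ := Units.mk0 (1 + s) hne with hw
        have hwns : w ∉ S := by
          intro hmem'
          exact hns ((mem_coeSet_iff S w).mpr hmem')
        obtain ⟨t, htS, hwt⟩ : ∃ t : Fˣ, t ∈ S ∧ w * t = xu := by
          refine ⟨w⁻¹ * xu, ?_, by rw [← mul_assoc, mul_inv_cancel, one_mul]⟩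
          rw [Subgroup.mul_mem_iff_of_index_two hidx]
          simp only [inv_mem_iff]
          exact iff_of_false hwns hmem
        refine ⟨(t : F), Or.inl ((mem_coeSet_iff S t).mpr htS),
          ((su * t : Fˣ) : F), Or.inl ((mem_coeSet_iff S _).mpr (S.mul_mem hsu htS)), ?_⟩
        have : (t : F) + 1 * ((su * t : Fˣ) : F) = x :=
          calc (t : F) + 1 * ((su * t : Fˣ) : F)
              = (1 + s) * (t : F) := by rw [Units.val_mul, hsus']; ring
            _ = (w : F) * (t : F) := rfl
            _ = ((w * t : Fˣ) : F) := (Units.val_mul _ _).symm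
            _ = x := by rw [hwt]; rfl
        exact this.symm
  · intro h
    have hne_top : S ≠ ⊤ := by
      intro hST
      rw [hST, Subgroup.index_top] at hidx
      exact absurd hidx (by norm_num)
    obtain ⟨u, hu⟩ : ∃ u : Fˣ, u ∉ S := by
      by_contra hc
      push_neg at hc
      exact hne_top ((Subgroup.eq_top_iff' S).mpr hc)
    have huF : (u : F) ∈ sumSet (coeSet S) 1 := by
      rw [h]; exact u.ne_zero
    obtain ⟨hune, t₁, ht₁, t₂, ht₂, heq⟩ := huF
    rcases ht₁ with ht₁ | ht₁
    · rcases ht₂ with ht₂ | ht₂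
      · obtain ⟨v₁, hv₁, hv₁e⟩ := ht₁
        obtain ⟨v₂, hv₂, hv₂e⟩ := ht₂
        have hv₁e' : (v₁ : F) = t₁ := hv₁e
        have hv₂e' : (v₂ : F) = t₂ := hv₂e
        rw [← hv₁e', ← hv₂e'] at heq
        have key : (1 : F) + ((v₂ * v₁⁻¹ : Fˣ) : F) = ((u * v₁⁻¹ : Fˣ) : F) := by
          rw [Units.val_mul, Units.val_mul, Units.val_inv_eq_inv_val]
          have hv1ne : (v₁ : F) ≠ 0 := v₁.ne_zero
          field_simp
          rw [heq]; ring
        refine ⟨((v₂ * v₁⁻¹ : Fˣ) : F),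
          (mem_coeSet_iff S _).mpr (S.mul_mem hv₂ (S.inv_mem hv₁)), ?_, ?_⟩
        · rw [key, mem_coeSet_iff]
          intro hmem
          have : u ∈ S := by
            have h2 := S.mul_mem hmem hv₁
            rwa [mul_assoc, inv_mul_cancel, mul_one] at h2
          exact hu this
        · rw [key]
          exact (u * v₁⁻¹).ne_zero
      · exfalso
        rw [Set.mem_singleton_iff] at ht₂
        rw [ht₂, mul_zero, add_zero] at heq
        obtain ⟨v₁, hv₁, hv₁e⟩ := ht₁
        have hv₁e' : (v₁ : F) = t₁ := hv₁e
        have : u = v₁ := Units.ext (heq.trans hv₁e'.symm)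
        exact hu (this ▸ hv₁)
    · exfalso
      rw [Set.mem_singleton_iff] at ht₁
      rw [ht₁, zero_add, one_mul] at heq
      rcases ht₂ with ht₂ | ht₂
      · obtain ⟨v₂, hv₂, hv₂e⟩ := ht₂
        have hv₂e' : (v₂ : F) = t₂ := hv₂e
        have : u = v₂ := Units.ext (heq.trans hv₂e'.symm)
        exact hu (this ▸ hv₂)
      · rw [Set.mem_singleton_iff] at ht₂
        exact hune (heq.trans ht₂)
end

section
/- Let F be a field of characteristic not 2 and T a subgroup of Fˣ of index 4 containing all nonzero squares. Suppose T + T ≠ T and −1 ∉ ΣT, where ΣT is the set of all nonzero finite sums of elements of T. Then ΣT is a subgroup of Fˣ of index 2 which properly contains T, is closed under addition (i.e. x + y ∈ ΣT ∪ {0} for x, y ∈ ΣT), and does not contain −1; that is, ΣT ∪ {0} is the positive cone of an ordering of F. -/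
/-- The set of nonzero finite sums of elements of `T`. -/
def sigmaSet {F : Type*} [Field F] (T : Set F) : Set F :=
  {x | x ≠ 0 ∧ ∃ n : ℕ, ∃ f : Fin (n + 1) → F, (∀ i, f i ∈ T) ∧ ∑ i, f i = x}

/-!
The nonzero sums of elements of `T` form a subgroup `ΣT` of `Fˣ`: sums multiply by
distributivity, and `x⁻¹ = x · (x⁻¹)²` with `(x⁻¹)² ∈ T`. Since `T + T ≠ T`, it lies strictly
between `T` and `Fˣ` (the latter because `-1 ∉ ΣT`), so `T` having index 4 forces `ΣT` to have
index 2. Then `-1` represents the nontrivial coset, so exactly one of `x`, `-x` lies in `ΣT`.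
-/

section SigmaSet

variable {F : Type*} [Field F] {S : Set F}

lemma mem_sigmaSet_iff {x : F} :
    x ∈ sigmaSet S ↔ x ≠ 0 ∧ x ∈ AddSubmonoid.closure S := by
  refine ⟨fun ⟨hx, n, f, hf, hsum⟩ => ⟨hx, hsum ▸ sum_mem fun i _ =>
    AddSubmonoid.subset_closure (hf i)⟩, fun ⟨hx, hcl⟩ => ⟨hx, ?_⟩⟩
  obtain ⟨l, hl, rfl⟩ := AddSubmonoid.exists_list_of_mem_closure hcl
  cases l with
  | nil => exact absurd List.sum_nil hx
  | cons a t => exact ⟨t.length, fun i => (a :: t)[i.1], fun i => hl _ (List.getElem_mem _),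
      Fin.sum_univ_getElem (a :: t)⟩

lemma mem_sigmaSet_of_mem {x : F} (hx : x ∈ S) (hx0 : x ≠ 0) : x ∈ sigmaSet S :=
  mem_sigmaSet_iff.2 ⟨hx0, AddSubmonoid.subset_closure hx⟩

lemma subset_sigmaSet (hS : (0 : F) ∉ S) : S ⊆ sigmaSet S := fun _ hx =>
  mem_sigmaSet_of_mem hx fun h => hS (h ▸ hx)

lemma sumSet_one_subset_sigmaSet : sumSet S 1 ⊆ sigmaSet S := by
  rintro x ⟨hx, t₁, ht₁, t₂, ht₂, rfl⟩
  have mem_closure : ∀ t ∈ S ∪ {0}, t ∈ AddSubmonoid.closure S := by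
    rintro t (ht | rfl)
    exacts [AddSubmonoid.subset_closure ht, zero_mem _]
  rw [one_mul] at hx ⊢
  exact mem_sigmaSet_iff.2 ⟨hx, add_mem (mem_closure t₁ ht₁) (mem_closure t₂ ht₂)⟩

lemma subset_sumSet_one (hS : (0 : F) ∉ S) : S ⊆ sumSet S 1 := fun x hx =>
  ⟨fun h => hS (h ▸ hx), x, Or.inl hx, 0, Or.inr rfl, by ring⟩

lemma add_eq_zero_or_mem_sigmaSet {x y : F} (hx : x ∈ sigmaSet S) (hy : y ∈ sigmaSet S) :
    x + y = 0 ∨ x + y ∈ sigmaSet S := by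
  rw [mem_sigmaSet_iff] at *
  exact (eq_or_ne (x + y) 0).imp_right fun h => ⟨h, add_mem hx.2 hy.2⟩

open Pointwise in
lemma mul_mem_sigmaSet (hmul : ∀ a ∈ S, ∀ b ∈ S, a * b ∈ S) {x y : F}
    (hx : x ∈ sigmaSet S) (hy : y ∈ sigmaSet S) : x * y ∈ sigmaSet S := by
  rw [mem_sigmaSet_iff] at *
  refine ⟨mul_ne_zero hx.1 hy.1, ?_⟩
  have h := AddSubmonoid.mul_mem_mul hx.2 hy.2
  rw [AddSubmonoid.closure_mul_closure] at h
  exact AddSubmonoid.closure_mono (by rintro _ ⟨a, ha, b, hb, rfl⟩; exact hmul a ha b hb) h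

lemma inv_mem_sigmaSet (hmul : ∀ a ∈ S, ∀ b ∈ S, a * b ∈ S)
    (hsq : ∀ a : F, a ≠ 0 → a ^ 2 ∈ S) {x : F} (hx : x ∈ sigmaSet S) :
    x⁻¹ ∈ sigmaSet S := by
  have hx0 : x ≠ 0 := hx.1
  have hinv0 : x⁻¹ ^ 2 ≠ 0 := pow_ne_zero 2 (inv_ne_zero hx0)
  have := mul_mem_sigmaSet hmul hx (mem_sigmaSet_of_mem (hsq x⁻¹ (inv_ne_zero hx0)) hinv0)
  rwa [show x * x⁻¹ ^ 2 = x⁻¹ by field_simp] at this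

end SigmaSet

theorem Subgroup.index_eq_of_lt_of_index_eq_sq {G : Type*} [Group G] {H K : Subgroup G}
    {p : ℕ} (hp : p.Prime) (hH : H.index = p ^ 2) (hHK : H < K) (hK : K ≠ ⊤) :
    K.index = p := by
  obtain ⟨k, hk, hKk⟩ := (Nat.dvd_prime_pow hp).1 (hH ▸ Subgroup.index_dvd_of_le hHK.le)
  interval_cases k
  · exact absurd (Subgroup.index_eq_one.1 (by simpa using hKk)) hK
  · simpa using hKk
  · have hrel : H.relIndex K * p ^ 2 = 1 * p ^ 2 := by
      rw [← hKk, Subgroup.relIndex_mul_index hHK.le, hH, hKk, one_mul]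
    have := Subgroup.relIndex_eq_one.1 (Nat.eq_of_mul_eq_mul_right (by positivity [hp.pos]) hrel)
    exact absurd this (not_le_of_gt hHK)

theorem Subgroup.mem_or_neg_mem_of_index_eq_two {M : Type*} [Monoid M] [HasDistribNeg M]
    {S : Subgroup Mˣ} (hS : S.index = 2) (hneg : -1 ∉ S) (u : Mˣ) : u ∈ S ∨ -u ∈ S := by
  rw [← neg_one_mul, Subgroup.mul_mem_iff_of_index_two hS]
  tauto

section CoeSet

variable {F : Type*} [Field F] (T : Subgroup Fˣ)

lemma zero_notMem_coeSet : (0 : F) ∉ coeSet T := fun ⟨u, _, hu⟩ => u.ne_zero hu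

lemma mul_mem_coeSet : ∀ x ∈ coeSet T, ∀ y ∈ coeSet T, x * y ∈ coeSet T := by
  rintro _ ⟨u, hu, rfl⟩ _ ⟨v, hv, rfl⟩
  exact ⟨u * v, mul_mem hu hv, Units.val_mul u v⟩

variable {T}

lemma sq_mem_coeSet (hsq : ∀ u : Fˣ, u ^ 2 ∈ T) (x : F) (hx : x ≠ 0) : x ^ 2 ∈ coeSet T :=
  ⟨Units.mk0 x hx ^ 2, hsq _, by simp⟩

def sigmaSubgroup (hsq : ∀ u : Fˣ, u ^ 2 ∈ T) : Subgroup Fˣ where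
  carrier := {u | (u : F) ∈ sigmaSet (coeSet T)}
  mul_mem' hu hv := mul_mem_sigmaSet (mul_mem_coeSet T) hu hv
  one_mem' := subset_sigmaSet (zero_notMem_coeSet T) ⟨1, one_mem T, rfl⟩
  inv_mem' {u} hu := by
    simpa using inv_mem_sigmaSet (mul_mem_coeSet T) (sq_mem_coeSet hsq) (x := u) hu

lemma mem_sigmaSubgroup (hsq : ∀ u : Fˣ, u ^ 2 ∈ T) {u : Fˣ} :
    u ∈ sigmaSubgroup hsq ↔ (u : F) ∈ sigmaSet (coeSet T) :=
  Iff.rfl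

lemma coeSet_sigmaSubgroup (hsq : ∀ u : Fˣ, u ^ 2 ∈ T) :
    coeSet (sigmaSubgroup hsq) = sigmaSet (coeSet T) :=
  Set.Subset.antisymm (by rintro _ ⟨u, hu, rfl⟩; exact hu)
    fun x hx => ⟨Units.mk0 x hx.1, hx, rfl⟩

lemma le_sigmaSubgroup (hsq : ∀ u : Fˣ, u ^ 2 ∈ T) : T ≤ sigmaSubgroup hsq :=
  fun u hu => subset_sigmaSet (zero_notMem_coeSet T) ⟨u, hu, rfl⟩

end CoeSet

theorem sigma_is_ordering_general {F : Type*} [Field F]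
    (T : Subgroup Fˣ) (hidx : T.index = 4) (hsq : ∀ u : Fˣ, u ^ 2 ∈ T)
    (hTT : sumSet (coeSet T) 1 ≠ coeSet T)
    (hneg : (-1 : F) ∉ sigmaSet (coeSet T)) :
    (∀ x ∈ sigmaSet (coeSet T), ∀ y ∈ sigmaSet (coeSet T), x * y ∈ sigmaSet (coeSet T)) ∧
    (∀ x ∈ sigmaSet (coeSet T), x⁻¹ ∈ sigmaSet (coeSet T)) ∧
    coeSet T ⊆ sigmaSet (coeSet T) ∧ coeSet T ≠ sigmaSet (coeSet T) ∧
    (∀ x ∈ sigmaSet (coeSet T), ∀ y ∈ sigmaSet (coeSet T),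
      x + y = 0 ∨ x + y ∈ sigmaSet (coeSet T)) ∧
    (∀ x : F, x ≠ 0 → x ∈ sigmaSet (coeSet T) ∨ -x ∈ sigmaSet (coeSet T)) ∧
    (∀ x : F, ¬(x ∈ sigmaSet (coeSet T) ∧ -x ∈ sigmaSet (coeSet T))) := by
  have hmul := mul_mem_coeSet T
  have hsqT := sq_mem_coeSet hsq
  have hne : coeSet T ≠ sigmaSet (coeSet T) := fun h => hTT <|
    (sumSet_one_subset_sigmaSet.trans h.symm.subset).antisymm
      (subset_sumSet_one (zero_notMem_coeSet T))
  set S := sigmaSubgroup hsq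
  have hTS : T < S := (le_sigmaSubgroup hsq).lt_of_ne fun h => hne <| by
    rw [← coeSet_sigmaSubgroup hsq, ← h]
  have hnegS : -1 ∉ S := fun h => hneg <| by simpa using (mem_sigmaSubgroup hsq).1 h
  have hS : S ≠ ⊤ := fun h => hnegS ((Subgroup.eq_top_iff' S).1 h (-1))
  have hSidx : S.index = 2 :=
    Subgroup.index_eq_of_lt_of_index_eq_sq Nat.prime_two hidx hTS hS
  refine ⟨fun x hx y hy => mul_mem_sigmaSet hmul hx hy,
    fun x hx => inv_mem_sigmaSet hmul hsqT hx, subset_sigmaSet (zero_notMem_coeSet T), hne,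
    fun x hx y hy => add_eq_zero_or_mem_sigmaSet hx hy, fun x hx => ?_, ?_⟩
  · exact (Subgroup.mem_or_neg_mem_of_index_eq_two hSidx hnegS (Units.mk0 x hx)).imp id
      fun h => by simpa using (mem_sigmaSubgroup hsq).1 h
  · rintro x ⟨hx, hnx⟩
    have := mul_mem_sigmaSet hmul (inv_mem_sigmaSet hmul hsqT hx) hnx
    rw [mul_neg, inv_mul_cancel₀ hx.1] at this
    exact hneg this

/-- If T has index 4 in Fˣ, contains the nonzero squares, T + T ≠ T and −1 ∉ ΣT,
then ΣT ∪ {0} is the positive cone of an ordering of F: ΣT is a subgroup of index 2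
properly containing T, additively closed, and not containing −1. -/
theorem sigma_is_ordering {F : Type*} [Field F] (hchar : (2 : F) ≠ 0)
    (T : Subgroup Fˣ) (hidx : T.index = 4) (hsq : ∀ u : Fˣ, u ^ 2 ∈ T)
    (hTT : sumSet (coeSet T) 1 ≠ coeSet T)
    (hneg : (-1 : F) ∉ sigmaSet (coeSet T)) :
    (∀ x ∈ sigmaSet (coeSet T), ∀ y ∈ sigmaSet (coeSet T), x * y ∈ sigmaSet (coeSet T)) ∧
    (∀ x ∈ sigmaSet (coeSet T), x⁻¹ ∈ sigmaSet (coeSet T)) ∧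
    coeSet T ⊆ sigmaSet (coeSet T) ∧ coeSet T ≠ sigmaSet (coeSet T) ∧
    (∀ x ∈ sigmaSet (coeSet T), ∀ y ∈ sigmaSet (coeSet T),
      x + y = 0 ∨ x + y ∈ sigmaSet (coeSet T)) ∧
    (∀ x : F, x ≠ 0 → x ∈ sigmaSet (coeSet T) ∨ -x ∈ sigmaSet (coeSet T)) ∧
    (∀ x : F, ¬(x ∈ sigmaSet (coeSet T) ∧ -x ∈ sigmaSet (coeSet T))) :=
  sigma_is_ordering_general T hidx hsq hTT hneg
end

section
/- Let v be a valuation on a field F with valuation ring A, maximal ideal M, unit group U, and residue field k of characteristic not 2. Let T₀ be a subgroup of kˣ containing all nonzero squares of k such that k is T₀-rigid, and set T = (Fˣ)² · π⁻¹(T₀), where π : U → kˣ is the residue map restricted to units. Then F is T-rigid. -/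
open IsLocalRing

section helpers

variable {F : Type*} [Field F] {A : ValuationSubring F}

/-- The set T = (Fˣ)² · π⁻¹(T₀) as a subset of F. -/
def myT (A : ValuationSubring F) (T₀ : Set (ResidueField A)) : Set F :=
  {x : F | ∃ (f : F) (u : A), f ≠ 0 ∧ IsUnit u ∧ residue A u ∈ T₀ ∧ x = f ^ 2 * u}

variable {T₀ : Set (ResidueField A)}

lemma coe_unit_ne_zero {u : A} (hu : IsUnit u) : ((u : A) : F) ≠ 0 := by
  intro h
  exact hu.ne_zero (Subtype.ext (by simpa using h))

lemma myT_ne_zero {x : F} (hx : x ∈ myT A T₀) : x ≠ 0 := by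
  obtain ⟨f, u, hf, hu, -, rfl⟩ := hx
  exact mul_ne_zero (pow_ne_zero _ hf) (coe_unit_ne_zero hu)

lemma residue_val_inv {u : A} (hu : IsUnit u) :
    residue A (↑hu.unit⁻¹ : A) = (residue A u)⁻¹ := by
  have h : u * (↑hu.unit⁻¹ : A) = 1 := hu.mul_val_inv
  have h2 := congrArg (residue A) h
  rw [map_mul, map_one] at h2
  exact eq_inv_of_mul_eq_one_right h2

lemma coe_val_inv {u : A} (hu : IsUnit u) :
    ((↑hu.unit⁻¹ : A) : F) = ((u : A) : F)⁻¹ := by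
  have h : u * (↑hu.unit⁻¹ : A) = 1 := hu.mul_val_inv
  have h2 : ((u : A) : F) * ((↑hu.unit⁻¹ : A) : F) = 1 := by
    exact_mod_cast congrArg (fun x : A => (x : F)) h
  exact eq_inv_of_mul_eq_one_left (by rw [mul_comm]; exact h2)

lemma myT_mul (hmul : ∀ a ∈ T₀, ∀ b ∈ T₀, a * b ∈ T₀) {x y : F}
    (hx : x ∈ myT A T₀) (hy : y ∈ myT A T₀) : x * y ∈ myT A T₀ := by
  obtain ⟨f, u, hf, hu, hru, rfl⟩ := hx
  obtain ⟨g, w, hg, hw, hrw, rfl⟩ := hy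
  exact ⟨f * g, u * w, mul_ne_zero hf hg, hu.mul hw,
    by rw [map_mul]; exact hmul _ hru _ hrw, by push_cast; ring⟩

lemma myT_inv (hinv : ∀ a ∈ T₀, a⁻¹ ∈ T₀) {x : F}
    (hx : x ∈ myT A T₀) : x⁻¹ ∈ myT A T₀ := by
  obtain ⟨f, u, hf, hu, hru, rfl⟩ := hx
  refine ⟨f⁻¹, ↑hu.unit⁻¹, inv_ne_zero hf, Units.isUnit _,
    by rw [residue_val_inv hu]; exact hinv _ hru, ?_⟩
  rw [coe_val_inv hu, mul_inv, ← inv_pow]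

lemma myT_unit_mem {b : A} (hb : IsUnit b) (hres : residue A b ∈ T₀) :
    ((b : A) : F) ∈ myT A T₀ := ⟨1, b, one_ne_zero, hb, hres, by ring⟩

/-- A unit of A lying in T has residue in T₀. -/
lemma myT_residue_mem (hmul : ∀ a ∈ T₀, ∀ b ∈ T₀, a * b ∈ T₀)
    (hsq : ∀ y : ResidueField A, y ≠ 0 → y ^ 2 ∈ T₀)
    {b : A} (hb : IsUnit b) (hbT : ((b : A) : F) ∈ myT A T₀) : residue A b ∈ T₀ := by
  obtain ⟨f, u, hf, hu, hru, heq⟩ := hbT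
  have hu0 : ((u : A) : F) ≠ 0 := coe_unit_ne_zero hu
  set g : A := b * ↑hu.unit⁻¹ with hg
  have hgu : IsUnit g := hb.mul (Units.isUnit _)
  have hgF : ((g : A) : F) = f ^ 2 := by
    rw [hg]; push_cast [coe_val_inv hu]
    rw [heq]; field_simp
  have hfA : f ∈ A := by
    rcases A.mem_or_inv_mem f with h | h
    · exact h
    · set h' : A := ⟨f⁻¹, h⟩ with hh'
      have hmulone : h' * (h' * g) = 1 := by
        apply Subtype.ext
        push_cast
        show f⁻¹ * (f⁻¹ * ((g : A) : F)) = 1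
        rw [hgF]; field_simp
      obtain ⟨c, hc⟩ : ∃ c : A, h' * c = 1 := ⟨h' * g, hmulone⟩
      have hcoe : ((h' * c : A) : F) = 1 := by rw [hc]; norm_num
      push_cast at hcoe
      have hcoe2 : f⁻¹ * ((c : A) : F) = 1 := hcoe
      have hcf : ((c : A) : F) = f := ((inv_mul_eq_one₀ hf).mp hcoe2).symm
      rw [← hcf]; exact c.2
  set fa : A := ⟨f, hfA⟩ with hfa
  have hfaeq : fa * fa = g := by
    apply Subtype.ext
    push_cast
    show f * f = ((g : A) : F)
    rw [hgF]; ring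
  have hfau : IsUnit fa := isUnit_of_mul_isUnit_left (hfaeq ▸ hgu)
  have hbeq : b = fa * fa * u := by
    apply Subtype.ext
    push_cast
    show (b : F) = f * f * ((u : A) : F)
    rw [heq]; ring
  have hres0 : residue A fa ≠ 0 := (residue_ne_zero_iff_isUnit _).2 hfau
  have hkey : residue A b = (residue A fa) ^ 2 * residue A u := by
    rw [hbeq, map_mul, map_mul]; ring
  rw [hkey]
  exact hmul _ (hsq _ hres0) _ hru

/-- Key lemma: if b ∉ T ∪ -T and 1+b ≠ 0 then 1+b ∈ T ∪ bT. -/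
lemma myT_key (h0 : (0 : ResidueField A) ∉ T₀)
    (hmul : ∀ a ∈ T₀, ∀ b ∈ T₀, a * b ∈ T₀)
    (hsq : ∀ y : ResidueField A, y ≠ 0 → y ^ 2 ∈ T₀)
    (hrigid : IsRigid T₀)
    {b : F} (hb : b ≠ 0) (hbT : b ∉ myT A T₀) (hbT' : -b ∉ myT A T₀)
    (h1b : 1 + b ≠ 0) :
    1 + b ∈ myT A T₀ ∨ ∃ t ∈ myT A T₀, 1 + b = b * t := by
  have h1T₀ : (1 : ResidueField A) ∈ T₀ := by
    have := hsq 1 one_ne_zero; simpa using this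
  by_cases hbA : b ∈ A
  · set ba : A := ⟨b, hbA⟩ with hba
    have h1bA : (1 : F) + b ∈ A := A.add_mem _ _ A.one_mem hbA
    set oba : A := ⟨1 + b, h1bA⟩ with hoba
    have hoba_eq : oba = 1 + ba := by apply Subtype.ext; push_cast; rfl
    by_cases hbu : IsUnit ba
    · -- b is a unit of A
      set bb := residue A ba with hbb
      have hbb0 : bb ≠ 0 := (residue_ne_zero_iff_isUnit _).2 hbu
      have hbbT : bb ∉ T₀ := fun h => hbT (myT_unit_mem hbu h)
      have hnegu : IsUnit (-ba) := hbu.neg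
      have hbbT' : -bb ∉ T₀ := by
        intro h
        apply hbT'
        have hcoe : ((-ba : A) : F) = -b := by push_cast; rfl
        have hm := myT_unit_mem hnegu (by rw [map_neg]; exact h)
        rwa [hcoe] at hm
      have h1bb : 1 + bb ≠ 0 := by
        intro h
        have hn : -bb = 1 := by linear_combination -h
        exact hbbT' (by rw [hn]; exact h1T₀)
      have hsum : (1 + bb) ∈ sumSet T₀ bb :=
        ⟨h1bb, 1, Or.inl h1T₀, 1, Or.inl h1T₀, by ring⟩
      rcases hrigid bb hbb0 hbbT hbbT' hsum with h | ⟨s, hs, hseq⟩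
      · left
        have hres : residue A oba ∈ T₀ := by rw [hoba_eq, map_add, map_one]; exact h
        have hmu : IsUnit oba := (residue_ne_zero_iff_isUnit _).1
          (by rw [hoba_eq, map_add, map_one]; exact h1bb)
        exact myT_unit_mem hmu hres
      · right
        set c : A := oba * ↑hbu.unit⁻¹ with hc
        have hcres : residue A c = s := by
          rw [hc, map_mul, residue_val_inv hbu, hoba_eq, map_add, map_one, ← hbb, hseq,
            mul_comm bb s, mul_assoc, mul_inv_cancel₀ hbb0, mul_one]
        have hcu : IsUnit c := (residue_ne_zero_iff_isUnit _).1
          (by rw [hcres]; exact fun h => h0 (h ▸ hs))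
        refine ⟨((c : A) : F), myT_unit_mem hcu (hcres ▸ hs), ?_⟩
        rw [hc]
        push_cast [coe_val_inv hbu]
        show (1 : F) + b = b * ((1 + b) * b⁻¹)
        field_simp
    · -- b in the maximal ideal
      left
      have h0res : residue A ba = 0 := (residue_eq_zero_iff _).2
        ((mem_maximalIdeal _).2 hbu)
      have hres : residue A oba = 1 := by
        rw [hoba_eq, map_add, map_one, h0res, add_zero]
      have hmu : IsUnit oba := (residue_ne_zero_iff_isUnit _).1
        (by rw [hres]; exact one_ne_zero)
      exact myT_unit_mem hmu (by rw [hres]; exact h1T₀)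
  · -- b ∉ A, so b⁻¹ ∈ A and b⁻¹ is not a unit of A
    right
    have hbinv : b⁻¹ ∈ A := (A.mem_or_inv_mem b).resolve_left hbA
    set ba : A := ⟨b⁻¹, hbinv⟩ with hba
    have hbnu : ¬IsUnit ba := by
      intro h
      obtain ⟨c, hc⟩ := h.exists_right_inv
      have hcoe : ((ba * c : A) : F) = 1 := by rw [hc]; norm_num
      push_cast at hcoe
      have hc2 : b⁻¹ * ((c : A) : F) = 1 := hcoe
      have hcf : ((c : A) : F) = b := ((inv_mul_eq_one₀ hb).mp hc2).symm
      exact hbA (hcf ▸ c.2)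
    have h0res : residue A ba = 0 := (residue_eq_zero_iff _).2
      ((mem_maximalIdeal _).2 hbnu)
    have h1bA : (1 : F) + b⁻¹ ∈ A := A.add_mem _ _ A.one_mem hbinv
    set oba : A := ⟨1 + b⁻¹, h1bA⟩ with hoba
    have hoba_eq : oba = 1 + ba := by apply Subtype.ext; push_cast; rfl
    have hres : residue A oba = 1 := by
      rw [hoba_eq, map_add, map_one, h0res, add_zero]
    have hmu : IsUnit oba := (residue_ne_zero_iff_isUnit _).1
      (by rw [hres]; exact one_ne_zero)
    refine ⟨((oba : A) : F), myT_unit_mem hmu (by rw [hres]; exact h1T₀), ?_⟩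
    show (1 : F) + b = b * (1 + b⁻¹)
    field_simp
    ring

end helpers

/-- Let A be a valuation ring of F with residue field k of characteristic not 2,
π the residue map.  If T₀ is a subgroup of kˣ containing the nonzero squares such that
k is T₀-rigid, and T = (Fˣ)²·π⁻¹(T₀), then F is T-rigid. -/
theorem rigid_of_residue_rigid {F : Type*} [Field F] (A : ValuationSubring F)
    (hk2 : (2 : IsLocalRing.ResidueField A) ≠ 0)
    (T₀ : Set (IsLocalRing.ResidueField A))
    (h0 : (0 : IsLocalRing.ResidueField A) ∉ T₀)
    (hmul : ∀ a ∈ T₀, ∀ b ∈ T₀, a * b ∈ T₀)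
    (hinv : ∀ a ∈ T₀, a⁻¹ ∈ T₀)
    (hsq : ∀ y : IsLocalRing.ResidueField A, y ≠ 0 → y ^ 2 ∈ T₀)
    (hrigid : IsRigid T₀) :
    IsRigid {x : F | ∃ (f : F) (u : A), f ≠ 0 ∧ IsUnit u ∧
      IsLocalRing.residue A u ∈ T₀ ∧ x = f ^ 2 * u} := by
  have key : IsRigid (myT A T₀) := by
    intro a ha haT haT' x hx
    obtain ⟨hx0, t₁, ht₁, t₂, ht₂, hxeq⟩ := hx
    rcases ht₂ with ht₂ | ht₂
    swap
    · rcases ht₁ with ht₁ | ht₁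
      · left
        rw [hxeq, Set.mem_singleton_iff.mp ht₂]
        simpa using ht₁
      · exfalso
        apply hx0
        rw [hxeq, Set.mem_singleton_iff.mp ht₁, Set.mem_singleton_iff.mp ht₂]
        ring
    rcases ht₁ with ht₁ | ht₁
    swap
    · right
      exact ⟨t₂, ht₂, by rw [hxeq, Set.mem_singleton_iff.mp ht₁]; ring⟩
    have ht₁0 : t₁ ≠ 0 := myT_ne_zero ht₁
    have ht₂0 : t₂ ≠ 0 := myT_ne_zero ht₂
    set b := a * t₂ / t₁ with hbdef
    have hb0 : b ≠ 0 := div_ne_zero (mul_ne_zero ha ht₂0) ht₁0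
    have hxb : x = t₁ * (1 + b) := by
      rw [hxeq, hbdef]; field_simp
    have hbT : b ∉ myT A T₀ := by
      intro h
      apply haT
      have haeq : a = b * t₁ * t₂⁻¹ := by
        rw [hbdef]; field_simp
      rw [haeq]
      exact myT_mul hmul (myT_mul hmul h ht₁) (myT_inv hinv ht₂)
    have hbT' : -b ∉ myT A T₀ := by
      intro h
      apply haT'
      have haeq : -a = -b * t₁ * t₂⁻¹ := by
        rw [hbdef]; field_simp
      rw [haeq]
      exact myT_mul hmul (myT_mul hmul h ht₁) (myT_inv hinv ht₂)
    have h1b : 1 + b ≠ 0 := by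
      intro h
      apply hx0
      rw [hxb, h, mul_zero]
    rcases myT_key h0 hmul hsq hrigid hb0 hbT hbT' h1b with h | ⟨t, ht, hteq⟩
    · left
      rw [hxb]
      exact myT_mul hmul ht₁ h
    · right
      refine ⟨t₂ * t, myT_mul hmul ht₂ ht, ?_⟩
      rw [hxb, hteq, hbdef]
      field_simp
  exact key
end

section
/- Let F be a field of characteristic not 2, a ∈ Fˣ a non-square, and K = F(√a). Then the set of nonzero elements of F that are sums of two squares in K equals the set of nonzero products x·y where x ∈ F is a sum of two squares of F and y ∈ F is of the form c² + a·d² with c, d ∈ F; i.e. (K² + K²) ∩ Fˣ = ((F² + F²)·(F² + aF²)) ∩ Fˣ. -/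
/-!
Write `α = c₁ + d₁√a`, `β = c₂ + d₂√a`. Since `1, √a` are linearly independent over `F`, the
equation `x = α² + β²` says `x = c₁² + c₂² + a(d₁² + d₂²)` and `c₁d₁ + c₂d₂ = 0`. If
`N = d₁² + d₂² ≠ 0`, orthogonality and the two-square identity give `(c₁² + c₂²) N = t² N²` with
`t = (c₁d₂ - c₂d₁) / N`, so `x = N (t² + a)`. If `N = 0` with `(d₁, d₂) ≠ 0`, then `-1` is a square
in `F` and every element of `F` is a sum of two squares. Conversely, a product
`(c² + d²)(e² + (f√a)²)` is a sum of two squares in `K` by the two-square identity.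
-/

section Field

variable {F : Type*} [Field F]

theorem exists_eq_sq_add_sq_of_isSquare_neg_one (h2 : (2 : F) ≠ 0) (hi : IsSquare (-1 : F))
    (x : F) : ∃ c d : F, x = c ^ 2 + d ^ 2 := by
  obtain ⟨i, hi⟩ := hi
  -- `x = ((x + 1) / 2) ^ 2 - ((x - 1) / 2) ^ 2`
  refine ⟨(x + 1) / 2, i * ((x - 1) / 2), ?_⟩
  field_simp
  linear_combination (x - 1) ^ 2 * hi

theorem isSquare_neg_one_of_sq_add_sq_eq_zero {d₁ d₂ : F} (h : d₁ ^ 2 + d₂ ^ 2 = 0)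
    (hd₁ : d₁ ≠ 0) : IsSquare (-1 : F) :=
  ⟨d₂ / d₁, by field_simp; linear_combination -h⟩

theorem exists_sq_add_sq_mul_sq_add_mul_sq_of_orthogonal (h2 : (2 : F) ≠ 0)
    (a c₁ c₂ d₁ d₂ : F) (horth : c₁ * d₁ + c₂ * d₂ = 0) :
    ∃ c d e f : F,
      c₁ ^ 2 + c₂ ^ 2 + a * (d₁ ^ 2 + d₂ ^ 2) = (c ^ 2 + d ^ 2) * (e ^ 2 + a * f ^ 2) := by
  by_cases hN : d₁ ^ 2 + d₂ ^ 2 = 0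
  · by_cases hd : d₁ = 0 ∧ d₂ = 0
    · exact ⟨c₁, c₂, 1, 0, by rw [hd.1, hd.2]; ring⟩
    have hi : IsSquare (-1 : F) := by
      rcases not_and_or.mp hd with hd₁ | hd₂
      · exact isSquare_neg_one_of_sq_add_sq_eq_zero hN hd₁
      · exact isSquare_neg_one_of_sq_add_sq_eq_zero (by rwa [add_comm]) hd₂
    obtain ⟨c, d, hcd⟩ := exists_eq_sq_add_sq_of_isSquare_neg_one h2 hi
      (c₁ ^ 2 + c₂ ^ 2 + a * (d₁ ^ 2 + d₂ ^ 2))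
    exact ⟨c, d, 1, 0, by rw [hcd]; ring⟩
  · refine ⟨d₁, d₂, (c₁ * d₂ - c₂ * d₁) / (d₁ ^ 2 + d₂ ^ 2), 1, ?_⟩
    field_simp
    linear_combination (c₁ * d₁ + c₂ * d₂) * horth

end Field

section QuadraticExtension

variable {F K : Type*} [Field F] [CommRing K] [Algebra F K] {a : F} {r : K}

theorem exists_algebraMap_mul_eq_sq_add_sq (hr : r ^ 2 = algebraMap F K a) (c d e f : F) :
    ∃ α β : K, algebraMap F K ((c ^ 2 + d ^ 2) * (e ^ 2 + a * f ^ 2)) = α ^ 2 + β ^ 2 := by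
  have hf : algebraMap F K (a * f ^ 2) = (algebraMap F K f * r) ^ 2 := by
    rw [mul_pow, hr, map_mul, map_pow, mul_comm]
  rw [map_mul, map_add, map_add, hf, map_pow, map_pow, map_pow, sq_add_sq_mul_sq_add_sq]
  exact ⟨_, _, rfl⟩

variable [Nontrivial K]

theorem eq_zero_of_algebraMap_add_algebraMap_mul_eq_zero (hns : ¬ ∃ y : F, y ^ 2 = a)
    (hr : r ^ 2 = algebraMap F K a) {p q : F}
    (h : algebraMap F K p + algebraMap F K q * r = 0) : p = 0 ∧ q = 0 := by
  have hinj := (algebraMap F K).injective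
  by_cases hq : q = 0
  · subst hq
    simp only [map_zero, zero_mul, add_zero] at h
    exact ⟨hinj (by rw [h, map_zero]), rfl⟩
  refine absurd ⟨-p / q, hinj ?_⟩ hns
  have hrv : r = algebraMap F K (-p / q) := by
    have hqq : algebraMap F K q⁻¹ * algebraMap F K q = 1 := by
      rw [← map_mul, inv_mul_cancel₀ hq, map_one]
    rw [div_eq_mul_inv, map_mul, map_neg]
    linear_combination algebraMap F K q⁻¹ * h - r * hqq
  rw [map_pow, ← hrv, hr]

theorem eq_and_orthogonal_of_algebraMap_eq_sq_add_sq (h2 : (2 : F) ≠ 0)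
    (hns : ¬ ∃ y : F, y ^ 2 = a) (hr : r ^ 2 = algebraMap F K a) {x c₁ c₂ d₁ d₂ : F}
    (h : algebraMap F K x = (algebraMap F K c₁ + algebraMap F K d₁ * r) ^ 2 +
      (algebraMap F K c₂ + algebraMap F K d₂ * r) ^ 2) :
    x = c₁ ^ 2 + c₂ ^ 2 + a * (d₁ ^ 2 + d₂ ^ 2) ∧ c₁ * d₁ + c₂ * d₂ = 0 := by
  have hcoord : algebraMap F K (c₁ ^ 2 + c₂ ^ 2 + a * (d₁ ^ 2 + d₂ ^ 2) - x)
      + algebraMap F K (2 * (c₁ * d₁ + c₂ * d₂)) * r = 0 := by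
    simp only [map_add, map_sub, map_mul, map_pow, map_ofNat]
    linear_combination -h - (algebraMap F K d₁ ^ 2 + algebraMap F K d₂ ^ 2) * hr
  obtain ⟨hx, hcross⟩ := eq_zero_of_algebraMap_add_algebraMap_mul_eq_zero hns hr hcoord
  exact ⟨(sub_eq_zero.mp hx).symm, (mul_eq_zero.mp hcross).resolve_left h2⟩

end QuadraticExtension

theorem sum_two_squares_quadratic_ext_general {F K : Type*} [Field F] [Field K] [Algebra F K]
    (hchar : (2 : F) ≠ 0) (a : F) (hns : ¬ ∃ y : F, y ^ 2 = a)
    (r : K) (hr : r ^ 2 = algebraMap F K a)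
    (hgen : ∀ x : K, ∃ c d : F, x = algebraMap F K c + algebraMap F K d * r) :
    ∀ x : F, x ≠ 0 →
      ((∃ α β : K, algebraMap F K x = α ^ 2 + β ^ 2) ↔
        ∃ c d e f : F, x = (c ^ 2 + d ^ 2) * (e ^ 2 + a * f ^ 2)) := by
  intro x _
  constructor
  · rintro ⟨α, β, h⟩
    obtain ⟨c₁, d₁, rfl⟩ := hgen α
    obtain ⟨c₂, d₂, rfl⟩ := hgen β
    obtain ⟨rfl, horth⟩ := eq_and_orthogonal_of_algebraMap_eq_sq_add_sq hchar hns hr h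
    exact exists_sq_add_sq_mul_sq_add_mul_sq_of_orthogonal hchar a c₁ c₂ d₁ d₂ horth
  · rintro ⟨c, d, e, f, rfl⟩
    exact exists_algebraMap_mul_eq_sq_add_sq hr c d e f

/-- For a quadratic extension K = F(√a) of a field F of characteristic not 2 (a a
non-square), a nonzero element x of F is a sum of two squares in K iff
x = (c² + d²)·(e² + a·f²) for some c, d, e, f ∈ F. -/
theorem sum_two_squares_quadratic_ext {F K : Type*} [Field F] [Field K] [Algebra F K]
    (hchar : (2 : F) ≠ 0) (a : F) (ha : a ≠ 0) (hns : ¬ ∃ y : F, y ^ 2 = a)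
    (r : K) (hr : r ^ 2 = algebraMap F K a)
    (hgen : ∀ x : K, ∃ c d : F, x = algebraMap F K c + algebraMap F K d * r) :
    ∀ x : F, x ≠ 0 →
      ((∃ α β : K, algebraMap F K x = α ^ 2 + β ^ 2) ↔
        ∃ c d e f : F, x = (c ^ 2 + d ^ 2) * (e ^ 2 + a * f ^ 2)) :=
  sum_two_squares_quadratic_ext_general hchar a hns r hr hgen
end

section
/- In the field K = ℚ₂(√5), −1 is a sum of two squares. -/
/-! Over ℚ₂(√5), 15 = ((5 + √5)/2)² + ((5 - √5)/2)², while −15 ≡ 1 (mod 8) is a square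
already in ℚ₂ by Hensel's lemma. If s² = −15 and a² + b² = 15, then
(sa/15)² + (sb/15)² = s² · 15 / 15² = −1. -/

open Polynomial in
theorem PadicInt.isSquare_of_norm_sub_one_lt {a : ℤ_[2]} (ha : ‖a - 1‖ < 1 / 4) : IsSquare a := by
  have hval : (X ^ 2 - C a).aeval (1 : ℤ_[2]) = -(a - 1) := by simp
  have hder : (X ^ 2 - C a).derivative.aeval (1 : ℤ_[2]) = 2 := by norm_num
  have h2 : ‖(2 : ℤ_[2])‖ = 2⁻¹ := by exact_mod_cast PadicInt.norm_p (p := 2)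
  have hnorm : ‖(X ^ 2 - C a).aeval (1 : ℤ_[2])‖ <
      ‖(X ^ 2 - C a).derivative.aeval (1 : ℤ_[2])‖ ^ 2 := by
    rw [hval, hder, norm_neg, h2]
    linarith
  obtain ⟨z, hz, -⟩ := hensels_lemma hnorm
  exact ⟨z, by simpa [sub_eq_zero, eq_comm, sq] using hz⟩

theorem Padic.isSquare_intCast_of_modEq_one {n : ℤ} (hn : n ≡ 1 [ZMOD 8]) : IsSquare (n : ℚ_[2]) := by
  obtain ⟨k, hk⟩ := Int.modEq_iff_dvd.mp hn.symm
  have h8 : ‖(8 : ℤ_[2])‖ = 8⁻¹ := by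
    rw [show (8 : ℤ_[2]) = (2 : ℕ) ^ 3 by norm_num, PadicInt.norm_p_pow]
    norm_num
  have hclose : ‖(n : ℤ_[2]) - 1‖ < 1 / 4 := by
    rw [show (n : ℤ_[2]) - 1 = 8 * k by exact_mod_cast hk, norm_mul, h8]
    calc 8⁻¹ * ‖(k : ℤ_[2])‖ ≤ 8⁻¹ * 1 := by gcongr; exact PadicInt.norm_le_one _
      _ < 1 / 4 := by norm_num
  exact_mod_cast (PadicInt.isSquare_of_norm_sub_one_lt hclose).map PadicInt.Coe.ringHom

theorem exists_sq_add_sq_eq_neg_one_of_isSquare_neg {F : Type*} [Field F] {c a b : F}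
    (hc : c ≠ 0) (hneg : IsSquare (-c)) (hsum : a ^ 2 + b ^ 2 = c) :
    ∃ α β : F, α ^ 2 + β ^ 2 = -1 := by
  obtain ⟨s, hs⟩ := hneg
  refine ⟨s * a / c, s * b / c, ?_⟩
  field_simp
  linear_combination (s * s) * hsum - c * hs

theorem neg_one_sum_two_squares_Q2_sqrt5_general {K : Type*} [Field K] [Algebra ℚ_[2] K]
    (r : K) (hr : r ^ 2 = 5) :
    ∃ α β : K, α ^ 2 + β ^ 2 = -1 := by
  have : CharZero K := charZero_of_injective_algebraMap (algebraMap ℚ_[2] K).injective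
  have hneg : IsSquare (-15 : ℚ_[2]) := by
    exact_mod_cast Padic.isSquare_intCast_of_modEq_one (n := -15) (by decide)
  refine exists_sq_add_sq_eq_neg_one_of_isSquare_neg (c := 15)
    (a := (5 + r) / 2) (b := (5 - r) / 2) (by norm_num) (by simpa [map_ofNat] using hneg.map (algebraMap ℚ_[2] K)) ?_
  linear_combination hr / 2

/-- In the field K = ℚ₂(√5), −1 is a sum of two squares. -/
theorem neg_one_sum_two_squares_Q2_sqrt5 {K : Type*} [Field K] [Algebra ℚ_[2] K]
    (r : K) (hr : r ^ 2 = 5)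
    (hgen : ∀ x : K, ∃ c d : ℚ_[2],
      x = algebraMap ℚ_[2] K c + algebraMap ℚ_[2] K d * r) :
    ∃ α β : K, α ^ 2 + β ^ 2 = -1 :=
  neg_one_sum_two_squares_Q2_sqrt5_general r hr
end

section
/- Let F be a field of characteristic not 2 and T a subgroup of Fˣ containing all nonzero squares such that −1 ∉ T and T is additively closed (t₁ + t₂ ∈ T for all t₁, t₂ ∈ T with t₁ + t₂ ≠ 0; note 0 ∉ T + T since −1 ∉ T). Then there exists an ordering of F whose positive cone contains T; in particular F is formally real. -/
/-- If T is a subgroup of Fˣ containing the nonzero squares with −1 ∉ T and T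
additively closed, then T is contained in the positive cone of an ordering of F;
in particular F is formally real. -/
theorem preordering_extends_to_ordering {F : Type*} [Field F] (hchar : (2 : F) ≠ 0)
    (T : Subgroup Fˣ) (hsq : ∀ u : Fˣ, u ^ 2 ∈ T)
    (hneg : (-1 : F) ∉ coeSet T)
    (hadd : ∀ x ∈ coeSet T, ∀ y ∈ coeSet T, x + y ≠ 0 → x + y ∈ coeSet T) :
    (∃ P : Set F,
      (∀ x ∈ P, ∀ y ∈ P, x + y ∈ P) ∧
      (∀ x ∈ P, ∀ y ∈ P, x * y ∈ P) ∧
      (∀ x : F, x ∈ P ∨ -x ∈ P) ∧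
      (∀ x : F, x ∈ P → -x ∈ P → x = 0) ∧
      coeSet T ⊆ P) ∧
    ∀ (n : ℕ) (f : Fin n → F), ∑ i, (f i) ^ 2 ≠ -1 := by
  classical
  set T' : Set F := coeSet T with hT'
  -- basic facts about T'
  have hsq' : ∀ x : F, x ≠ 0 → x ^ 2 ∈ T' := by
    intro x hx
    exact ⟨(Units.mk0 x hx) ^ 2, hsq _, by simp⟩
  have h1 : (1 : F) ∈ T' := by simpa using hsq' 1 one_ne_zero
  have hmul' : ∀ x ∈ T', ∀ y ∈ T', x * y ∈ T' := by
    rintro x ⟨u, hu, rfl⟩ y ⟨v, hv, rfl⟩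
    exact ⟨u * v, mul_mem hu hv, by simp⟩
  -- the collection of preorderings containing T' ∪ {0}
  set C : Set (Set F) := {S | (T' ∪ {0}) ⊆ S ∧ (∀ x ∈ S, ∀ y ∈ S, x + y ∈ S) ∧
      (∀ x ∈ S, ∀ y ∈ S, x * y ∈ S) ∧ (-1 : F) ∉ S} with hC
  have hbase : (T' ∪ {0} : Set F) ∈ C := by
    refine ⟨subset_rfl, ?_, ?_, ?_⟩
    · rintro x (hx | rfl) y (hy | rfl)
      · by_cases h : x + y = 0
        · exact Or.inr h
        · exact Or.inl (hadd x hx y hy h)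
      · rw [add_zero]; exact Or.inl hx
      · rw [zero_add]; exact Or.inl hy
      · simp
    · rintro x (hx | rfl) y (hy | rfl)
      · exact Or.inl (hmul' x hx y hy)
      · simp
      · simp
      · simp
    · rintro (h | h)
      · exact hneg h
      · simp only [Set.mem_singleton_iff, neg_eq_zero] at h
        exact one_ne_zero h
  have hchain : ∀ c ⊆ C, IsChain (· ⊆ ·) c → c.Nonempty → ∃ ub ∈ C, ∀ s ∈ c, s ⊆ ub := by
    intro c hcC hc hne
    obtain ⟨s, hs⟩ := hne
    refine ⟨⋃₀ c, ⟨?_, ?_, ?_, ?_⟩, fun t ht => Set.subset_sUnion_of_mem ht⟩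
    · exact ((hcC hs).1).trans (Set.subset_sUnion_of_mem hs)
    · rintro x ⟨s₁, hs₁, hx⟩ y ⟨s₂, hs₂, hy⟩
      rcases hc.total hs₁ hs₂ with h | h
      · exact ⟨s₂, hs₂, (hcC hs₂).2.1 x (h hx) y hy⟩
      · exact ⟨s₁, hs₁, (hcC hs₁).2.1 x hx y (h hy)⟩
    · rintro x ⟨s₁, hs₁, hx⟩ y ⟨s₂, hs₂, hy⟩
      rcases hc.total hs₁ hs₂ with h | h
      · exact ⟨s₂, hs₂, (hcC hs₂).2.2.1 x (h hx) y hy⟩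
      · exact ⟨s₁, hs₁, (hcC hs₁).2.2.1 x hx y (h hy)⟩
    · rintro ⟨s₁, hs₁, hx⟩
      exact (hcC hs₁).2.2.2 hx
  obtain ⟨P, hTP, hPmax⟩ := zorn_subset_nonempty C hchain _ hbase
  obtain ⟨⟨hPT, hPadd, hPmul, hPneg⟩, hmaxP⟩ := hPmax
  have h1P : (1 : F) ∈ P := hPT (Or.inl h1)
  have h0P : (0 : F) ∈ P := hPT (Or.inr rfl)
  have hsqP : ∀ x : F, x ^ 2 ∈ P := by
    intro x
    by_cases hx : x = 0
    · simpa [hx] using h0P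
    · exact hPT (Or.inl (hsq' x hx))
  -- P ∩ -P = {0}
  have hPsupport : ∀ x : F, x ∈ P → -x ∈ P → x = 0 := by
    intro x hx hnx
    by_contra hx0
    apply hPneg
    have : x * -x * (x⁻¹) ^ 2 ∈ P := hPmul _ (hPmul x hx _ hnx) _ (hsqP _)
    have heq : x * -x * (x⁻¹) ^ 2 = -1 := by field_simp
    rwa [heq] at this
  -- P is total
  have hPtotal : ∀ x : F, x ∈ P ∨ -x ∈ P := by
    intro a
    by_contra h
    push_neg at h
    obtain ⟨ha, hna⟩ := h
    have ha0 : a ≠ 0 := fun h0 => ha (h0 ▸ h0P)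
    -- P' = P + a P is in C and strictly larger
    set P' : Set F := {x | ∃ p ∈ P, ∃ q ∈ P, x = p + a * q} with hP'
    have hPP' : P ⊆ P' := fun p hp => ⟨p, hp, 0, h0P, by ring⟩
    have haP' : a ∈ P' := ⟨0, h0P, 1, h1P, by ring⟩
    have hP'C : P' ∈ C := by
      refine ⟨(hPT).trans hPP', ?_, ?_, ?_⟩
      · rintro x ⟨p, hp, q, hq, rfl⟩ y ⟨p', hp', q', hq', rfl⟩
        exact ⟨p + p', hPadd _ hp _ hp', q + q', hPadd _ hq _ hq', by ring⟩
      · rintro x ⟨p, hp, q, hq, rfl⟩ y ⟨p', hp', q', hq', rfl⟩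
        refine ⟨p * p' + a ^ 2 * (q * q'), hPadd _ (hPmul _ hp _ hp')
          _ (hPmul _ (hsqP a) _ (hPmul _ hq _ hq')),
          p * q' + q * p', hPadd _ (hPmul _ hp _ hq') _ (hPmul _ hq _ hp'), by ring⟩
      · rintro ⟨p, hp, q, hq, hpq⟩
        by_cases hq0 : q = 0
        · apply hPneg
          rw [hq0, mul_zero, add_zero] at hpq
          rwa [hpq]
        · apply hna
          have hmem : (1 + p) * q * (q⁻¹) ^ 2 ∈ P :=
            hPmul _ (hPmul _ (hPadd _ h1P _ hp) _ hq) _ (hsqP _)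
          have hap : 1 + p = -(a * q) := by linear_combination -hpq
          have heq : (1 + p) * q * (q⁻¹) ^ 2 = -a := by
            rw [hap]; field_simp
          rwa [heq] at hmem
    exact ha (hPP'.antisymm (hmaxP hP'C hPP') ▸ haP')
  have hTsub : T' ⊆ P := fun x hx => hPT (Or.inl hx)
  refine ⟨⟨P, hPadd, hPmul, hPtotal, hPsupport, hTsub⟩, ?_⟩
  -- formally real
  intro n f hsum
  have hmem : ∑ i, (f i) ^ 2 ∈ P :=
    Finset.sum_induction _ (· ∈ P) (fun a b ha hb => hPadd a ha b hb) h0P (fun i _ => hsqP (f i))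
  rw [hsum] at hmem
  have : (1 : F) = 0 := hPsupport 1 h1P hmem
  exact one_ne_zero this
end
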